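/- (Theorem 2, invariance part) Let (X, μ) and (Y, ν) be probability spaces, T : X → X and S : Y → Y measure-preserving maps, and φ : X → Y a measure-preserving map with a measure-preserving measurable inverse such that φ ∘ T = S ∘ φ almost everywhere. Then a sequence (c_n) of positive reals is a scaling sequence for T if and only if it is a scaling sequence for S. -/

import Mathlib

open MeasureTheory Filter Set
open scoped ENNReal

/-- Shannon entropy of a finite measurable partition, encoded as a map `f : X → F`
into a finite set, with respect to the measure `μ` (convention `0 log 0 = 0`). -/
noncomputable def shannonEntropy {X : Type*} [MeasurableSpace X] (μ : Measure X)
    {F : Type*} [Fintype F] (f : X → F) : ℝ :=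
  -∑ a : F, (μ (f ⁻¹' {a})).toReal * Real.log (μ (f ⁻¹' {a})).toReal

/-- `H(ξ_T^n)`: the Shannon entropy of the joint partition
`x ↦ (f x, f (T x), …, f (T^[n-1] x))`. -/
noncomputable def jointH {X : Type*} [MeasurableSpace X] (μ : Measure X)
    (T : X → X) {F : Type*} [Fintype F] (f : X → F) (n : ℕ) : ℝ :=
  shannonEntropy μ (fun x => (fun i : Fin n => f (T^[(i : ℕ)] x)))

/-- The `ε`-entropy `H_ε(f)`: the infimum, over measurable sets `A` with
`μ A > 1 − ε`, of the Shannon entropy of `f` with respect to the normalized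
restriction of `μ` to `A`. -/
noncomputable def epsEntropy {X : Type*} [MeasurableSpace X] (μ : Measure X)
    {F : Type*} [Fintype F] (f : X → F) (ε : ℝ) : ℝ :=
  sInf {x : ℝ | ∃ A : Set X, MeasurableSet A ∧ ENNReal.ofReal (1 - ε) < μ A ∧
    x = shannonEntropy ((μ A)⁻¹ • μ.restrict A) f}

/-- The joint partition map `ξ_T^n : x ↦ (f x, f (T x), …, f (T^[n-1] x))`. -/
def jointMap {X F : Type*} (T : X → X) (f : X → F) (n : ℕ) : X → (Fin n → F) :=
  fun x => (fun i : Fin n => f (T^[(i : ℕ)] x))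

/-- `(c_n)` is a scaling sequence for `T`: the `c_n` are positive (for `n ≥ 1`);
for every finite partition `f`, `lim_{ε→0} limsup_n H_ε(ξ_T^n)/c_n < ∞`; and there
is a finite partition `f` with `lim_{ε→0} liminf_n H_ε(ξ_T^n)/c_n > 0`. Since
`H_ε` is nonincreasing in `ε`, the limits as `ε → 0⁺` are the suprema over
`ε ∈ (0,1)`; all quantities are computed in `[0,∞]`. -/
def IsScalingSeq {X : Type*} [MeasurableSpace X] (μ : Measure X) (T : X → X)
    (c : ℕ → ℝ) : Prop :=
  (∀ n : ℕ, 1 ≤ n → 0 < c n) ∧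
  (∀ (k : ℕ) (f : X → Fin k), Measurable f →
    (⨆ ε ∈ Set.Ioo (0 : ℝ) 1,
      Filter.limsup
        (fun n : ℕ => ENNReal.ofReal (epsEntropy μ (jointMap T f n) ε / c n))
        Filter.atTop) < ⊤) ∧
  (∃ (k : ℕ) (f : X → Fin k), Measurable f ∧
    0 < ⨆ ε ∈ Set.Ioo (0 : ℝ) 1,
      Filter.liminf
        (fun n : ℕ => ENNReal.ofReal (epsEntropy μ (jointMap T f n) ε / c n))
        Filter.atTop)

/-!
A partition `g` of `Y` is carried to the partition `g ∘ φ` of `X`, and a partition `f` of `X`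
to `f ∘ ψ`, which is `f` again up to a null set. Since `φ` intertwines `T` and `S` along
almost every `T`-orbit, `ξ_S^n(g) ∘ φ = ξ_T^n(g ∘ φ)` almost everywhere. Since `φ` is measure
preserving with an almost-everywhere inverse, the admissible sets in the definition of `H_ε`
correspond (`B ↦ φ⁻¹ B` and `A ↦ ψ⁻¹ A`, the latter up to a null set) together with the
normalized restrictions, so the ε-entropies agree partition by partition, and with them the
quantities defining a scaling sequence.
-/

section Entropy

variable {X Y F : Type*} [MeasurableSpace X] [MeasurableSpace Y] [Fintype F]

lemma shannonEntropy_congr {μ : Measure X} {ν : Measure Y} {f : X → F} {g : Y → F}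
    (h : ∀ a, μ (f ⁻¹' {a}) = ν (g ⁻¹' {a})) :
    shannonEntropy μ f = shannonEntropy ν g := by
  simp only [shannonEntropy, h]

lemma shannonEntropy_congr_ae {μ : Measure X} {f₁ f₂ : X → F} (h : f₁ =ᵐ[μ] f₂) :
    shannonEntropy μ f₁ = shannonEntropy μ f₂ :=
  shannonEntropy_congr fun a => measure_congr (h.preimage {a})

lemma MeasureTheory.MeasurePreserving.shannonEntropy_comp [MeasurableSpace F]
    [MeasurableSingletonClass F] {μ : Measure X} {ν : Measure Y} {φ : X → Y} {g : Y → F}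
    (hφ : MeasurePreserving φ μ ν) (hg : Measurable g) :
    shannonEntropy μ (g ∘ φ) = shannonEntropy ν g :=
  shannonEntropy_congr fun a =>
    hφ.measure_preimage (hg (measurableSet_singleton a)).nullMeasurableSet

lemma epsEntropy_congr_ae {μ : Measure X} {f₁ f₂ : X → F} (h : f₁ =ᵐ[μ] f₂) (ε : ℝ) :
    epsEntropy μ f₁ ε = epsEntropy μ f₂ ε := by
  unfold epsEntropy
  simp_rw [fun A : Set X => shannonEntropy_congr_ae
    (Measure.ae_smul_measure (ae_restrict_of_ae (s := A) h) (μ A)⁻¹)]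

lemma MeasureTheory.MeasurePreserving.epsEntropy_comp [MeasurableSpace F]
    [MeasurableSingletonClass F] {μ : Measure X} {ν : Measure Y} {φ : X → Y} {ψ : Y → X}
    {g : Y → F} (hφ : MeasurePreserving φ μ ν) (hψ : Measurable ψ)
    (hψφ : ∀ᵐ x ∂μ, ψ (φ x) = x) (hg : Measurable g) (ε : ℝ) :
    epsEntropy μ (g ∘ φ) ε = epsEntropy ν g ε := by
  have restrict_preimage : ∀ B, MeasurableSet B →
      shannonEntropy ((μ (φ ⁻¹' B))⁻¹ • μ.restrict (φ ⁻¹' B)) (g ∘ φ) =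
        shannonEntropy ((ν B)⁻¹ • ν.restrict B) g := fun B hB => by
    rw [hφ.measure_preimage hB.nullMeasurableSet]
    exact ((hφ.restrict_preimage hB).smul_measure _).shannonEntropy_comp hg
  unfold epsEntropy
  congr 1
  ext e
  constructor
  · rintro ⟨A, hA, hμA, rfl⟩
    have hAe : φ ⁻¹' (ψ ⁻¹' A) =ᵐ[μ] A :=
      (hψφ.mono fun x hx => by simp only [mem_preimage, hx]).set_eq
    have hνA : ν (ψ ⁻¹' A) = μ A := by
      rw [← hφ.measure_preimage (hψ hA).nullMeasurableSet, measure_congr hAe]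
    refine ⟨ψ ⁻¹' A, hψ hA, hνA ▸ hμA, ?_⟩
    rw [← restrict_preimage _ (hψ hA), measure_congr hAe, Measure.restrict_congr_set hAe]
  · rintro ⟨B, hB, hνB, rfl⟩
    refine ⟨φ ⁻¹' B, hφ.measurable hB, ?_, (restrict_preimage B hB).symm⟩
    rwa [hφ.measure_preimage hB.nullMeasurableSet]

end Entropy

section Dynamics

open Measure

variable {X Y F : Type*} [MeasurableSpace X] {μ : Measure X} {T : X → X} {S : Y → Y}
  {φ : X → Y} {ψ : Y → X}

lemma MeasureTheory.Measure.QuasiMeasurePreserving.ae_forall_iterate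
    (hT : QuasiMeasurePreserving T μ μ) {p : X → Prop} (h : ∀ᵐ x ∂μ, p x) :
    ∀ᵐ x ∂μ, ∀ n, p (T^[n] x) :=
  ae_all_iff.2 fun n => (hT.iterate n).ae h

lemma ae_iterate_semiconj (hT : QuasiMeasurePreserving T μ μ)
    (hconj : ∀ᵐ x ∂μ, φ (T x) = S (φ x)) : ∀ᵐ x ∂μ, ∀ n, φ (T^[n] x) = S^[n] (φ x) := by
  filter_upwards [hT.ae_forall_iterate hconj] with x hx n
  induction n with
  | zero => rfl
  | succ n ih => rw [Function.iterate_succ_apply', hx n, ih, Function.iterate_succ_apply']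

lemma jointMap_congr_ae (hT : QuasiMeasurePreserving T μ μ) {f₁ f₂ : X → F}
    (h : f₁ =ᵐ[μ] f₂) (n : ℕ) : jointMap T f₁ n =ᵐ[μ] jointMap T f₂ n := by
  filter_upwards [hT.ae_forall_iterate h] with x hx
  exact funext fun i => hx i

lemma jointMap_comp_ae_eq (hT : QuasiMeasurePreserving T μ μ)
    (hconj : ∀ᵐ x ∂μ, φ (T x) = S (φ x)) (g : Y → F) (n : ℕ) :
    jointMap S g n ∘ φ =ᵐ[μ] jointMap T (g ∘ φ) n := by
  filter_upwards [ae_iterate_semiconj hT hconj] with x hx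
  exact funext fun i => congrArg g (hx i).symm

variable [MeasurableSpace Y] {ν : Measure Y}

lemma ae_semiconj_of_ae_inverse (hT : QuasiMeasurePreserving T μ μ)
    (hψ : QuasiMeasurePreserving ψ ν μ) (hψφ : ∀ᵐ x ∂μ, ψ (φ x) = x)
    (hφψ : ∀ᵐ y ∂ν, φ (ψ y) = y) (hconj : ∀ᵐ x ∂μ, φ (T x) = S (φ x)) :
    ∀ᵐ y ∂ν, ψ (S y) = T (ψ y) := by
  filter_upwards [hψ.ae hconj, (hT.comp hψ).ae hψφ, hφψ] with y hconj_y hψφ_y hφψ_y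
  calc ψ (S y) = ψ (S (φ (ψ y))) := by rw [hφψ_y]
    _ = T (ψ y) := by rw [← hconj_y]; exact hψφ_y

lemma measurable_jointMap [MeasurableSpace F] {g : Y → F} (hS : Measurable S)
    (hg : Measurable g) (n : ℕ) : Measurable (jointMap S g n) :=
  measurable_pi_lambda _ fun i => hg.comp (hS.iterate i)

lemma epsEntropy_jointMap_comp [Fintype F] [MeasurableSpace F] [MeasurableSingletonClass F]
    (hT : QuasiMeasurePreserving T μ μ) (hS : Measurable S) (hφ : MeasurePreserving φ μ ν)
    (hψ : Measurable ψ) (hψφ : ∀ᵐ x ∂μ, ψ (φ x) = x) (hconj : ∀ᵐ x ∂μ, φ (T x) = S (φ x))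
    {g : Y → F} (hg : Measurable g) (n : ℕ) (ε : ℝ) :
    epsEntropy μ (jointMap T (g ∘ φ) n) ε = epsEntropy ν (jointMap S g n) ε := by
  rw [← epsEntropy_congr_ae (jointMap_comp_ae_eq hT hconj g n),
    hφ.epsEntropy_comp hψ hψφ (measurable_jointMap hS hg n)]

lemma IsScalingSeq.of_forall_exists_epsEntropy_eq {c : ℕ → ℝ}
    (hYX : ∀ k (g : Y → Fin k), Measurable g → ∃ f : X → Fin k, Measurable f ∧
      ∀ n ε, epsEntropy μ (jointMap T f n) ε = epsEntropy ν (jointMap S g n) ε)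
    (hXY : ∀ k (f : X → Fin k), Measurable f → ∃ g : Y → Fin k, Measurable g ∧
      ∀ n ε, epsEntropy μ (jointMap T f n) ε = epsEntropy ν (jointMap S g n) ε)
    (h : IsScalingSeq μ T c) : IsScalingSeq ν S c := by
  obtain ⟨hc, hsup, k, f, hf, hinf⟩ := h
  refine ⟨hc, fun k g hg => ?_, ?_⟩
  · obtain ⟨f, hf, hfg⟩ := hYX k g hg
    simpa only [hfg] using hsup k f hf
  · obtain ⟨g, hg, hfg⟩ := hXY k f hf
    exact ⟨k, g, hg, by simpa only [hfg] using hinf⟩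

lemma IsScalingSeq.of_ae_semiconj {c : ℕ → ℝ} (hT : QuasiMeasurePreserving T μ μ)
    (hS : Measurable S) (hφ : MeasurePreserving φ μ ν) (hψ : Measurable ψ)
    (hψφ : ∀ᵐ x ∂μ, ψ (φ x) = x) (hconj : ∀ᵐ x ∂μ, φ (T x) = S (φ x))
    (h : IsScalingSeq μ T c) : IsScalingSeq ν S c := by
  refine h.of_forall_exists_epsEntropy_eq (fun k g hg => ?_) fun k f hf => ?_
  · exact ⟨g ∘ φ, hg.comp hφ.measurable, epsEntropy_jointMap_comp hT hS hφ hψ hψφ hconj hg⟩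
  · have hf_ae : (f ∘ ψ) ∘ φ =ᵐ[μ] f := hψφ.mono fun x hx => congrArg f hx
    refine ⟨f ∘ ψ, hf.comp hψ, fun n ε => ?_⟩
    rw [← epsEntropy_jointMap_comp hT hS hφ hψ hψφ hconj (hf.comp hψ),
      epsEntropy_congr_ae (jointMap_congr_ae hT hf_ae n)]

end Dynamics

theorem isScalingSeq_isomorphism_invariant_general {X Y : Type*}
    [MeasurableSpace X] [MeasurableSpace Y]
    (μ : Measure X) (ν : Measure Y)
    (T : X → X) (S : Y → Y) (hT : MeasurePreserving T μ μ) (hS : MeasurePreserving S ν ν)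
    (φ : X → Y) (ψ : Y → X) (hφ : MeasurePreserving φ μ ν) (hψ : MeasurePreserving ψ ν μ)
    (hψφ : ∀ᵐ x ∂μ, ψ (φ x) = x) (hφψ : ∀ᵐ y ∂ν, φ (ψ y) = y)
    (hconj : ∀ᵐ x ∂μ, φ (T x) = S (φ x))
    (c : ℕ → ℝ) :
    IsScalingSeq μ T c ↔ IsScalingSeq ν S c := by
  have hconj_inv : ∀ᵐ y ∂ν, ψ (S y) = T (ψ y) :=
    ae_semiconj_of_ae_inverse hT.quasiMeasurePreserving hψ.quasiMeasurePreserving hψφ hφψ hconj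
  exact ⟨IsScalingSeq.of_ae_semiconj hT.quasiMeasurePreserving hS.measurable hφ hψ.measurable hψφ
      hconj,
    IsScalingSeq.of_ae_semiconj hS.quasiMeasurePreserving hT.measurable hψ hφ.measurable hφψ
      hconj_inv⟩

/-- Theorem 2, invariance part: if `φ` is an isomorphism of measure
spaces intertwining `T` and `S` almost everywhere, then `(c_n)` is a scaling
sequence for `T` iff it is a scaling sequence for `S`. -/
theorem isScalingSeq_isomorphism_invariant {X Y : Type*}
    [MeasurableSpace X] [MeasurableSpace Y]
    (μ : Measure X) (ν : Measure Y) [IsProbabilityMeasure μ] [IsProbabilityMeasure ν]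
    (T : X → X) (S : Y → Y) (hT : MeasurePreserving T μ μ) (hS : MeasurePreserving S ν ν)
    (φ : X → Y) (ψ : Y → X) (hφ : MeasurePreserving φ μ ν) (hψ : MeasurePreserving ψ ν μ)
    (hψφ : ∀ᵐ x ∂μ, ψ (φ x) = x) (hφψ : ∀ᵐ y ∂ν, φ (ψ y) = y)
    (hconj : ∀ᵐ x ∂μ, φ (T x) = S (φ x))
    (c : ℕ → ℝ) :
    IsScalingSeq μ T c ↔ IsScalingSeq ν S c :=
  isScalingSeq_isomorphism_invariant_general μ ν T S hT hS φ ψ hφ hψ hψφ hφψ hconj c
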